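/- Let f_1, …, f_m : ℝⁿ → ℝ ∪ {+∞} (m ≥ 2) be lower semicontinuous functions, each with unbounded domain and with dom(f_1 + … + f_m) unbounded, satisfying the qualification condition: whenever u_1 + … + u_m = 0 with u_i ∈ ∂^∞f_i(∞) for each i, one has u_1 = … = u_m = 0. Then ∂(f_1 + … + f_m)(∞) ⊆ ∂f_1(∞) + … + ∂f_m(∞) and ∂^∞(f_1 + … + f_m)(∞) ⊆ ∂^∞f_1(∞) + … + ∂^∞f_m(∞). -/

import Mathlib

open Filter Topology Set Pointwise RealInnerProductSpace

noncomputable section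

variable {E : Type*} [NormedAddCommGroup E] [InnerProductSpace ℝ E]

/-- The Fréchet (regular) normal cone to `Ω` at `x`:
`{v | limsup_{y→x, y∈Ω} ⟪v, y-x⟫/‖y-x‖ ≤ 0}`, empty if `x ∉ Ω`. -/
def FrechetNormalCone (Ω : Set E) (x : E) : Set E :=
  {v | x ∈ Ω ∧ ∀ ε > (0:ℝ), ∀ᶠ y in 𝓝[Ω] x, ⟪v, y - x⟫ ≤ ε * ‖y - x‖}

/-- The limiting (Mordukhovich) normal cone to `Ω` at `x`. -/
def LimitingNormalCone (Ω : Set E) (x : E) : Set E :=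
  {v | ∃ xs vs : ℕ → E, (∀ k, vs k ∈ FrechetNormalCone Ω (xs k)) ∧
    Tendsto xs atTop (𝓝 x) ∧ Tendsto vs atTop (𝓝 v)}

/-- The normal cone to an unbounded set `Ω` at infinity. -/
def NormalConeAtInfty (Ω : Set E) : Set E :=
  {v | ∃ xs vs : ℕ → E, (∀ k, vs k ∈ FrechetNormalCone Ω (xs k)) ∧
    Tendsto (fun k => ‖xs k‖) atTop atTop ∧ Tendsto vs atTop (𝓝 v)}

/-- The epigraph of `f : E → ℝ ∪ {+∞}` as a subset of the (ℓ²-)product `E × ℝ`. -/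
def epiSet (f : E → EReal) : Set (WithLp 2 (E × ℝ)) :=
  {p | f (WithLp.equiv 2 (E × ℝ) p).1 ≤ ((WithLp.equiv 2 (E × ℝ) p).2 : EReal)}

/-- The point `(x, t)` of the (ℓ²-)product `E × ℝ`. -/
def mkP (x : E) (t : ℝ) : WithLp 2 (E × ℝ) := (WithLp.equiv 2 (E × ℝ)).symm (x, t)

/-- `𝒩(f)`: limits of limiting normals to `epi f` at points `(x_k, f(x_k))` with `‖x_k‖ → ∞`. -/
def NclAtInfty (f : E → EReal) : Set (E × ℝ) :=
  {q | ∃ (xs : ℕ → E) (ws : ℕ → WithLp 2 (E × ℝ)),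
    (∀ k, f (xs k) ≠ ⊤) ∧
    Tendsto (fun k => ‖xs k‖) atTop atTop ∧
    (∀ k, ws k ∈ LimitingNormalCone (epiSet f) (mkP (xs k) (f (xs k)).toReal)) ∧
    Tendsto (fun k => WithLp.equiv 2 (E × ℝ) (ws k)) atTop (𝓝 q)}

/-- The limiting subdifferential of `f` at infinity: `∂f(∞) = {u | (u,-1) ∈ 𝒩(f)}`. -/
def subInfty (f : E → EReal) : Set E := {u | (u, (-1 : ℝ)) ∈ NclAtInfty f}

/-- The singular subdifferential of `f` at infinity: `∂^∞f(∞) = {u | (u,0) ∈ 𝒩(f)}`. -/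
def singSubInfty (f : E → EReal) : Set E := {u | (u, (0 : ℝ)) ∈ NclAtInfty f}

/-- The singular subdifferential of `f` at a point `x ∈ dom f`:
`∂^∞f(x) = {v | (v,0) ∈ N((x,f(x)); epi f)}`, empty if `x ∉ dom f`. -/
def singSub (f : E → EReal) (x : E) : Set E :=
  {v | f x ≠ ⊤ ∧ mkP v 0 ∈ LimitingNormalCone (epiSet f) (mkP x (f x).toReal)}

/-- `λ∘∂f(∞)`: equals `λ • ∂f(∞)` for `λ ≠ 0` and `∂^∞f(∞)` for `λ = 0`. -/
def lamCirc (f : E → EReal) (lam : ℝ) : Set E :=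
  if lam = 0 then singSubInfty f else lam • subInfty f

/-- `f` is Lipschitz at infinity. -/
def LipschitzAtInfty (f : E → ℝ) : Prop :=
  ∃ L > (0:ℝ), ∃ R > (0:ℝ), ∀ x x' : E, R < ‖x‖ → R < ‖x'‖ → |f x - f x'| ≤ L * ‖x - x'‖

end

/-!
Lift to `H ×₂ ℝ^ι`: the map `(x, t) ↦ (x, ∑ᵢ tᵢ)` sends the intersection of the cylinders
`{(x, t) | (x, tᵢ) ∈ epi fᵢ}` onto `epi (∑ᵢ fᵢ)`, so a Fréchet normal to `epi (∑ᵢ fᵢ)` pulls back to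
a normal of that intersection. The fuzzy intersection rule, proved by penalising the distance
between independent copies of the variable, splits it up to any `δ > 0` into normals to the single
cylinders at nearby points, and these are normals to the `epi fᵢ`. Approximating a normal at
infinity of the sum in this way with `δ → 0`, the qualification condition keeps the pieces bounded
(normalising an unbounded sequence would produce singular subgradients at infinity that sum to zero
and are not all zero), and a convergent subsequence gives the decomposition.
-/

theorem WithLp.fst_sum {p : ENNReal} {α β κ : Type*} [AddCommGroup α] [AddCommGroup β]
    (s : Finset κ) (g : κ → WithLp p (α × β)) : (∑ i ∈ s, g i).fst = ∑ i ∈ s, (g i).fst :=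
  map_sum (WithLp.fstₗ p ℕ α β) g s

theorem WithLp.snd_sum {p : ENNReal} {α β κ : Type*} [AddCommGroup α] [AddCommGroup β]
    (s : Finset κ) (g : κ → WithLp p (α × β)) : (∑ i ∈ s, g i).snd = ∑ i ∈ s, (g i).snd :=
  map_sum (WithLp.sndₗ p ℕ α β) g s

theorem EReal.coe_finsetSum {α : Type*} (s : Finset α) (g : α → ℝ) :
    ((∑ i ∈ s, g i : ℝ) : EReal) = ∑ i ∈ s, (g i : EReal) :=
  map_sum (⟨⟨Real.toEReal, EReal.coe_zero⟩, EReal.coe_add⟩ : ℝ →+ EReal) g s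

theorem exists_le_sum_eq_of_sum_le {ι : Type*} [Fintype ι] [Nonempty ι] {a : ι → EReal}
    (hbot : ∀ i, a i ≠ ⊥) {t : ℝ} (h : ∑ i, a i ≤ t) :
    ∃ α : ι → ℝ, (∀ i, a i ≤ α i) ∧ ∑ i, α i = t := by
  classical
  have htop : ∀ i, a i ≠ ⊤ := by
    intro i hi
    have hrest : ∑ j ∈ Finset.univ.erase i, a j ≠ ⊥ :=
      Finset.sum_induction _ (· ≠ ⊥) (fun x y hx hy => by simp [EReal.add_eq_bot_iff, hx, hy])
        EReal.zero_ne_bot fun j _ => hbot j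
    rw [← Finset.add_sum_erase _ _ (Finset.mem_univ i), hi, EReal.top_add_of_ne_bot hrest] at h
    exact EReal.coe_ne_top t (top_le_iff.mp h)
  set r : ι → ℝ := fun i => (a i).toReal
  have hr : ∀ i, a i = r i := fun i => (EReal.coe_toReal (htop i) (hbot i)).symm
  have hsum : ∑ i, r i ≤ t := by
    rw [← EReal.coe_le_coe_iff, EReal.coe_finsetSum]
    simpa only [← hr] using h
  have hcard : (0 : ℝ) < Fintype.card ι := Nat.cast_pos.mpr Fintype.card_pos
  refine ⟨fun i => r i + (t - ∑ j, r j) / Fintype.card ι, fun i => ?_, ?_⟩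
  · rw [hr i, EReal.coe_le_coe_iff]
    linarith [div_nonneg (sub_nonneg.mpr hsum) hcard.le]
  · rw [Finset.sum_add_distrib, Finset.sum_const, Finset.card_univ, nsmul_eq_mul]
    field_simp
    ring

section FrechetNormal

variable {H K : Type*} [NormedAddCommGroup H] [InnerProductSpace ℝ H]
  [NormedAddCommGroup K] [InnerProductSpace ℝ K]

theorem frechetNormalCone_subset_limitingNormalCone (Ω : Set H) (x : H) :
    FrechetNormalCone Ω x ⊆ LimitingNormalCone Ω x :=
  fun _ hv => ⟨fun _ => x, fun _ => _, fun _ => hv, tendsto_const_nhds, tendsto_const_nhds⟩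

theorem smul_mem_frechetNormalCone {Ω : Set H} {x v : H} {c : ℝ} (hc : 0 ≤ c)
    (hv : v ∈ FrechetNormalCone Ω x) : c • v ∈ FrechetNormalCone Ω x := by
  refine ⟨hv.1, fun ε hε => ?_⟩
  have hcε : c * (ε / (c + 1)) ≤ ε := by
    rw [← mul_div_assoc, div_le_iff₀ (by positivity)]; nlinarith
  filter_upwards [hv.2 (ε / (c + 1)) (by positivity)] with y hy
  rw [real_inner_smul_left]
  calc c * ⟪v, y - x⟫ ≤ c * (ε / (c + 1) * ‖y - x‖) := mul_le_mul_of_nonneg_left hy hc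
    _ = c * (ε / (c + 1)) * ‖y - x‖ := by ring
    _ ≤ ε * ‖y - x‖ := mul_le_mul_of_nonneg_right hcε (norm_nonneg _)

theorem mem_frechetNormalCone_of_inner_le_sq {Ω : Set H} {x W : H} {C : ℝ} (hx : x ∈ Ω)
    (h : ∀ᶠ y in 𝓝[Ω] x, ⟪W, y - x⟫ ≤ C * ‖y - x‖ ^ 2) : W ∈ FrechetNormalCone Ω x := by
  refine ⟨hx, fun ε hε => ?_⟩
  have hsmall : ∀ᶠ y in 𝓝 x, C * ‖y - x‖ ≤ ε := by
    have : Tendsto (fun y => C * ‖y - x‖) (𝓝 x) (𝓝 0) :=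
      (continuous_const.mul (continuous_id.sub continuous_const).norm).tendsto' x 0 (by simp)
    exact this.eventually (eventually_le_nhds hε)
  filter_upwards [h, nhdsWithin_le_nhds hsmall] with y h1 h2
  calc ⟪W, y - x⟫ ≤ C * ‖y - x‖ ^ 2 := h1
    _ = C * ‖y - x‖ * ‖y - x‖ := by ring
    _ ≤ ε * ‖y - x‖ := mul_le_mul_of_nonneg_right h2 (norm_nonneg _)

theorem inner_nonpos_of_mem_frechetNormalCone {Ω : Set H} {x W d : H}
    (hW : W ∈ FrechetNormalCone Ω x) (hd : ∀ᶠ t in 𝓝[>] (0 : ℝ), x + t • d ∈ Ω) :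
    ⟪W, d⟫ ≤ 0 := by
  have hlim : Tendsto (fun t : ℝ => x + t • d) (𝓝[>] 0) (𝓝[Ω] x) := by
    refine tendsto_nhdsWithin_iff.mpr ⟨?_, hd⟩
    have : Tendsto (fun t : ℝ => x + t • d) (𝓝 0) (𝓝 (x + (0 : ℝ) • d)) :=
      (continuous_const.add (continuous_id.smul continuous_const)).tendsto 0
    simpa using this.mono_left nhdsWithin_le_nhds
  refine le_of_forall_pos_le_add fun ε hε => ?_
  obtain ⟨t, ht, ht0⟩ :=
    ((hlim.eventually (hW.2 (ε / (‖d‖ + 1)) (by positivity))).and self_mem_nhdsWithin).exists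
  simp only [add_sub_cancel_left, real_inner_smul_right, norm_smul,
    Real.norm_of_nonneg (le_of_lt ht0)] at ht
  have hd1 : ε / (‖d‖ + 1) * ‖d‖ ≤ ε := by
    rw [div_mul_eq_mul_div, div_le_iff₀ (by positivity)]; nlinarith [norm_nonneg d]
  have : ⟪W, d⟫ ≤ ε / (‖d‖ + 1) * ‖d‖ := by
    have ht0 : (0 : ℝ) < t := ht0
    nlinarith
  linarith

theorem inner_eq_zero_of_mem_frechetNormalCone {Ω : Set H} {x W d : H}
    (hW : W ∈ FrechetNormalCone Ω x) (hd : ∀ t : ℝ, x + t • d ∈ Ω) : ⟪W, d⟫ = 0 := by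
  have h₁ := inner_nonpos_of_mem_frechetNormalCone hW (Eventually.of_forall hd)
  have h₂ := inner_nonpos_of_mem_frechetNormalCone hW (d := -d)
    (Eventually.of_forall fun t => by simpa using hd (-t))
  rw [inner_neg_right] at h₂
  linarith

theorem eq_zero_of_mem_frechetNormalCone_of_mem_nhds {Ω : Set H} {x W : H}
    (hW : W ∈ FrechetNormalCone Ω x) (hΩ : Ω ∈ 𝓝 x) : W = 0 := by
  have hd : ∀ᶠ t in 𝓝[>] (0 : ℝ), x + t • W ∈ Ω := by
    have : Tendsto (fun t : ℝ => x + t • W) (𝓝 0) (𝓝 (x + (0 : ℝ) • W)) :=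
      (continuous_const.add (continuous_id.smul continuous_const)).tendsto 0
    exact nhdsWithin_le_nhds (this (by simpa using hΩ))
  have := inner_nonpos_of_mem_frechetNormalCone hW hd
  rw [real_inner_self_eq_norm_sq] at this
  exact norm_eq_zero.mp (by nlinarith [norm_nonneg W])

theorem mem_frechetNormalCone_of_comp {C : Set H} {Ω : Set K} {g : H → K} {x V : H} {W : K}
    {L : ℝ} (hx : x ∈ C) (hW : W ∈ FrechetNormalCone Ω (g x))
    (hg : ∀ᶠ y in 𝓝[C] x,
      g y ∈ Ω ∧ ‖g y - g x‖ ≤ L * ‖y - x‖ ∧ ⟪V, y - x⟫ ≤ ⟪W, g y - g x⟫) :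
    V ∈ FrechetNormalCone C x := by
  have hlim : Tendsto g (𝓝[C] x) (𝓝[Ω] (g x)) := by
    refine tendsto_nhdsWithin_iff.mpr ⟨?_, hg.mono fun y hy => hy.1⟩
    rw [tendsto_iff_norm_sub_tendsto_zero]
    refine squeeze_zero' (Eventually.of_forall fun y => norm_nonneg _)
      (hg.mono fun y hy => hy.2.1) ?_
    exact ((continuous_const.mul (continuous_id.sub continuous_const).norm).tendsto' x 0
      (by simp)).mono_left nhdsWithin_le_nhds
  refine ⟨hx, fun ε hε => ?_⟩
  have hLε : ε / (|L| + 1) * |L| ≤ ε := by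
    rw [div_mul_eq_mul_div, div_le_iff₀ (by positivity)]; nlinarith [abs_nonneg L]
  filter_upwards [hlim.eventually (hW.2 (ε / (|L| + 1)) (by positivity)), hg]
    with y hWy hgy
  calc ⟪V, y - x⟫ ≤ ⟪W, g y - g x⟫ := hgy.2.2
    _ ≤ ε / (|L| + 1) * ‖g y - g x‖ := hWy
    _ ≤ ε / (|L| + 1) * (|L| * ‖y - x‖) := by
        gcongr
        exact hgy.2.1.trans (mul_le_mul_of_nonneg_right (le_abs_self L) (norm_nonneg _))
    _ ≤ ε * ‖y - x‖ := by
        rw [← mul_assoc]; exact mul_le_mul_of_nonneg_right hLε (norm_nonneg _)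

end FrechetNormal

section FuzzyIntersection

open Metric

variable {Z ι : Type*} [NormedAddCommGroup Z]

def penaltyDomain (A : ι → Set Z) (z : Z) (r : ℝ) : Set (Z × (ι → Z)) :=
  closedBall z r ×ˢ univ.pi fun i => A i ∩ closedBall z r

theorem mem_penaltyDomain {A : ι → Set Z} {z : Z} {r : ℝ} {y : Z} {w : ι → Z} :
    (y, w) ∈ penaltyDomain A z r ↔ ‖y - z‖ ≤ r ∧ ∀ i, w i ∈ A i ∧ ‖w i - z‖ ≤ r := by
  simp [penaltyDomain, dist_eq_norm]

theorem isCompact_penaltyDomain [ProperSpace Z] {A : ι → Set Z} (hA : ∀ i, IsClosed (A i))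
    (z : Z) (r : ℝ) : IsCompact (penaltyDomain A z r) :=
  (isCompact_closedBall z r).prod
    (isCompact_univ_pi fun i => (isCompact_closedBall z r).inter_left (hA i))

variable [InnerProductSpace ℝ Z] [Fintype ι]

/-- The penalty term decouples the constraint `y ∈ ⋂ᵢ Aᵢ` into the constraints `wᵢ ∈ Aᵢ`. -/
def penalizedObjective (V z : Z) (ρ μ : ℝ) (p : Z × (ι → Z)) : ℝ :=
  -⟪V, p.1⟫ + ρ * ‖p.1 - z‖ ^ 2 + μ * ∑ i, ‖p.2 i - p.1‖ ^ 2

theorem continuous_penalizedObjective (V z : Z) (ρ μ : ℝ) :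
    Continuous (penalizedObjective (ι := ι) V z ρ μ) := by
  unfold penalizedObjective; fun_prop

theorem penalizedObjective_update [DecidableEq ι] (V z : Z) (ρ μ : ℝ) (y : Z) (w : ι → Z)
    (i : ι) (x : Z) :
    penalizedObjective V z ρ μ (y, Function.update w i x) =
      penalizedObjective V z ρ μ (y, w) + μ * (‖x - y‖ ^ 2 - ‖w i - y‖ ^ 2) := by
  simp only [penalizedObjective, Function.apply_update (fun _ v => ‖v - y‖ ^ 2),
    Finset.sum_update_of_mem (Finset.mem_univ i),
    Finset.sum_eq_add_sum_sdiff_singleton_of_mem (Finset.mem_univ i) fun j => ‖w j - y‖ ^ 2]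
  ring

theorem penalizedObjective_add_fst (V z : Z) (ρ μ : ℝ) (y e : Z) (w : ι → Z) :
    penalizedObjective V z ρ μ (y + e, w) =
      penalizedObjective V z ρ μ (y, w)
        - ⟪V - (2 * ρ) • (y - z) - ∑ i, (2 * μ) • (y - w i), e⟫
        + (ρ + μ * Fintype.card ι) * ‖e‖ ^ 2 := by
  have hw : ∀ i, ‖w i - (y + e)‖ ^ 2 = ‖w i - y‖ ^ 2 + 2 * ⟪y - w i, e⟫ + ‖e‖ ^ 2 := by
    intro i
    rw [show w i - (y + e) = -(y - w i) - e by abel, norm_sub_sq_real, norm_neg, inner_neg_left,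
      norm_sub_rev]
    ring
  simp only [penalizedObjective, hw, Finset.sum_add_distrib, ← Finset.mul_sum, Finset.sum_const,
    Finset.card_univ, nsmul_eq_mul, inner_sub_left, sum_inner, real_inner_smul_left,
    inner_add_right]
  rw [show y + e - z = (y - z) + e by abel, norm_add_sq_real, inner_sub_left]
  ring

theorem mem_frechetNormalCone_of_isMinOn_penalizedObjective {A : ι → Set Z} {V z y : Z}
    {w : ι → Z} {ρ μ r : ℝ}
    (hmin : IsMinOn (penalizedObjective V z ρ μ) (penaltyDomain A z r) (y, w))
    (hy : ‖y - z‖ < r) (hwA : ∀ i, w i ∈ A i) (hw : ∀ i, ‖w i - z‖ < r) :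
    (∀ i, (2 * μ) • (y - w i) ∈ FrechetNormalCone (A i) (w i)) ∧
      ∑ i, (2 * μ) • (y - w i) = V - (2 * ρ) • (y - z) := by
  classical
  constructor
  · intro i
    refine mem_frechetNormalCone_of_inner_le_sq (C := μ) (hwA i) ?_
    have hball : ∀ᶠ x in 𝓝 (w i), ‖x - z‖ ≤ r := by
      have : Continuous fun x : Z => ‖x - z‖ := (continuous_id.sub continuous_const).norm
      exact (this.tendsto (w i)).eventually (eventually_le_nhds (hw i))
    filter_upwards [self_mem_nhdsWithin, nhdsWithin_le_nhds hball] with x hxA hxz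
    have hmem : (y, Function.update w i x) ∈ penaltyDomain A z r := by
      refine mem_penaltyDomain.mpr ⟨hy.le, fun j => ?_⟩
      rcases eq_or_ne j i with rfl | hj
      · simpa using ⟨hxA, hxz⟩
      · simpa [hj] using ⟨hwA j, (hw j).le⟩
    have h := isMinOn_iff.mp hmin _ hmem
    rw [penalizedObjective_update] at h
    rw [show x - y = (x - w i) + (w i - y) by abel, norm_add_sq_real] at h
    rw [real_inner_smul_left, show y - w i = -(w i - y) by abel, inner_neg_left,
      real_inner_comm]
    nlinarith
  · set D := V - (2 * ρ) • (y - z) - ∑ i, (2 * μ) • (y - w i)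
    suffices hD : D = 0 from (sub_eq_zero.mp hD).symm
    have hnhds : closedBall z r ∈ 𝓝 y :=
      mem_of_superset (isOpen_ball.mem_nhds (mem_ball_iff_norm.mpr hy)) ball_subset_closedBall
    refine eq_zero_of_mem_frechetNormalCone_of_mem_nhds ?_ hnhds
    refine mem_frechetNormalCone_of_inner_le_sq (C := ρ + μ * Fintype.card ι)
      (mem_closedBall_iff_norm.mpr hy.le) (eventually_nhdsWithin_of_forall fun y' hy' => ?_)
    have h := isMinOn_iff.mp hmin (y + (y' - y), w) <| mem_penaltyDomain.mpr
      ⟨by simpa [dist_eq_norm] using hy', fun i => ⟨hwA i, (hw i).le⟩⟩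
    rw [penalizedObjective_add_fst] at h
    linarith

/-- Comparison with the feasible point `(z, z, …, z)`. -/
theorem add_le_inner_of_isMinOn_penalizedObjective {S : Set (Z × (ι → Z))} {V z y : Z}
    {w : ι → Z} {ρ μ : ℝ} (hmin : IsMinOn (penalizedObjective V z ρ μ) S (y, w))
    (hzS : (z, fun _ => z) ∈ S) :
    ρ * ‖y - z‖ ^ 2 + μ * ∑ i, ‖w i - y‖ ^ 2 ≤ ⟪V, y - z⟫ := by
  have h := isMinOn_iff.mp hmin _ hzS
  simp only [penalizedObjective, sub_self, norm_zero, zero_pow two_ne_zero, mul_zero,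
    Finset.sum_const_zero, add_zero] at h
  rw [inner_sub_right]
  linarith

theorem exists_tendsto_of_isMinOn_penalizedObjective [FiniteDimensional ℝ Z] {A : ι → Set Z}
    (hA : ∀ i, IsClosed (A i)) {V z : Z} (hz : z ∈ ⋂ i, A i) {ρ r : ℝ} (hρ : 0 < ρ) (hr : 0 ≤ r)
    {p : ℕ → Z × (ι → Z)} (hpS : ∀ k, p k ∈ penaltyDomain A z r)
    (hpmin : ∀ k : ℕ,
      IsMinOn (penalizedObjective V z ρ ((k : ℝ) + 1)) (penaltyDomain A z r) (p k)) :
    ∃ c ∈ ⋂ i, A i, ‖c - z‖ ≤ r ∧ ρ * ‖c - z‖ ^ 2 ≤ ⟪V, c - z⟫ ∧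
      ∃ φ : ℕ → ℕ, Tendsto (p ∘ φ) atTop (𝓝 (c, fun _ => c)) := by
  have hzS : (z, fun _ => z) ∈ penaltyDomain A z r := by
    simpa [mem_penaltyDomain, hr] using hz
  have hcmp := fun k => add_le_inner_of_isMinOn_penalizedObjective (hpmin k) hzS
  have hpen : ∀ k : ℕ, 0 ≤ ((k : ℝ) + 1) * ∑ i, ‖(p k).2 i - (p k).1‖ ^ 2 := fun k => by positivity
  obtain ⟨⟨c, cw⟩, hcS, φ, hφ, hlim⟩ := (isCompact_penaltyDomain hA z r).tendsto_subseq hpS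
  rw [mem_penaltyDomain] at hcS
  have hfst : Tendsto (fun k => (p (φ k)).1) atTop (𝓝 c) := (continuous_fst.tendsto _).comp hlim
  have hcw : ∀ i, cw i = c := by
    intro i
    have hbound : ∀ k, ‖(p (φ k)).2 i - (p (φ k)).1‖ ^ 2 ≤ ‖V‖ * r * (1 / ((φ k : ℝ) + 1)) := by
      intro k
      have h1 : ‖(p (φ k)).2 i - (p (φ k)).1‖ ^ 2 ≤ ∑ j, ‖(p (φ k)).2 j - (p (φ k)).1‖ ^ 2 :=
        Finset.single_le_sum (f := fun j => ‖(p (φ k)).2 j - (p (φ k)).1‖ ^ 2)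
          (fun j _ => sq_nonneg _) (Finset.mem_univ i)
      have h2 : ⟪V, (p (φ k)).1 - z⟫ ≤ ‖V‖ * r :=
        (real_inner_le_norm _ _).trans (mul_le_mul_of_nonneg_left
          (mem_penaltyDomain.mp (hpS (φ k))).1 (norm_nonneg V))
      rw [mul_one_div, le_div_iff₀ (by positivity)]
      nlinarith [hcmp (φ k), mul_nonneg hρ.le (sq_nonneg ‖(p (φ k)).1 - z‖)]
    have h0 : Tendsto (fun k => ‖V‖ * r * (1 / ((φ k : ℝ) + 1))) atTop (𝓝 0) := by
      simpa using (tendsto_one_div_add_atTop_nhds_zero_nat.comp hφ.tendsto_atTop).const_mul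
        (‖V‖ * r)
    have hsnd : Tendsto (fun k => (p (φ k)).2 i) atTop (𝓝 (cw i)) :=
      (((continuous_apply i).comp continuous_snd).tendsto _).comp hlim
    have h := le_of_tendsto_of_tendsto' ((hsnd.sub hfst).norm.pow 2) h0 hbound
    exact sub_eq_zero.mp (norm_eq_zero.mp (pow_eq_zero_iff two_ne_zero |>.mp
      (le_antisymm h (sq_nonneg _))))
  refine ⟨c, mem_iInter.mpr fun i => hcw i ▸ (hcS.2 i).1, hcS.1, ?_, φ, funext hcw ▸ hlim⟩
  exact le_of_tendsto_of_tendsto' (((hfst.sub_const z).norm.pow 2).const_mul ρ)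
    (tendsto_const_nhds.inner (hfst.sub_const z)) fun k => by linarith [hcmp (φ k), hpen (φ k)]

/-- The hypothesis on `V` puts the accumulation point `c` of the minimisers within `r / 2` of `z`,
so for a large penalty weight the minimiser lies strictly inside the ball. -/
theorem exists_isMinOn_penalizedObjective [FiniteDimensional ℝ Z] {A : ι → Set Z}
    (hA : ∀ i, IsClosed (A i)) {V z : Z} (hz : z ∈ ⋂ i, A i) {ρ r : ℝ} (hρ : 0 < ρ) (hr : 0 < r)
    (hV : ∀ c ∈ ⋂ i, A i, ‖c - z‖ ≤ r → ⟪V, c - z⟫ ≤ ρ * r / 2 * ‖c - z‖) :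
    ∃ μ y w, IsMinOn (penalizedObjective V z ρ μ) (penaltyDomain A z r) (y, w) ∧
      ‖y - z‖ < 3 * r / 4 ∧ (∀ i, w i ∈ A i) ∧ ∀ i, ‖w i - z‖ < 3 * r / 4 := by
  have hzS : (z, fun _ => z) ∈ penaltyDomain A z r := by
    simpa [mem_penaltyDomain, hr.le] using hz
  choose p hpS hpmin using fun k : ℕ =>
    (isCompact_penaltyDomain hA z r).exists_isMinOn ⟨_, hzS⟩
      (continuous_penalizedObjective V z ρ ((k : ℝ) + 1)).continuousOn
  obtain ⟨c, hcA, hcr, hρc, φ, hlim⟩ :=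
    exists_tendsto_of_isMinOn_penalizedObjective hA hz hρ hr.le hpS hpmin
  have hcz : ‖c - z‖ ≤ r / 2 := by
    by_contra! h
    nlinarith [hρc.trans (hV c hcA hcr), mul_pos (mul_pos hρ (by linarith : 0 < ‖c - z‖))
      (sub_pos.mpr h)]
  obtain ⟨k, hk⟩ := (hlim.eventually (ball_mem_nhds _ (by positivity : (0 : ℝ) < r / 4))).exists
  replace hk : dist (p (φ k)) (c, fun _ => c) < r / 4 := hk
  rw [Prod.dist_eq, max_lt_iff] at hk
  have hnear : ∀ v, dist v c < r / 4 → ‖v - z‖ < 3 * r / 4 := fun v hv => by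
    linarith [norm_sub_le_norm_sub_add_norm_sub v c z, dist_eq_norm v c]
  exact ⟨(φ k : ℝ) + 1, (p (φ k)).1, (p (φ k)).2, hpmin (φ k), hnear _ hk.1,
    fun i => ((mem_penaltyDomain.mp (hpS (φ k))).2 i).1,
    fun i => hnear _ ((dist_le_pi_dist _ _ i).trans_lt hk.2)⟩

/-- The fuzzy intersection rule. -/
theorem exists_frechetNormalCone_sum_near_of_iInter [FiniteDimensional ℝ Z] {A : ι → Set Z}
    (hA : ∀ i, IsClosed (A i)) {z V : Z} (hV : V ∈ FrechetNormalCone (⋂ i, A i) z) {δ : ℝ}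
    (hδ : 0 < δ) :
    ∃ w W : ι → Z, (∀ i, w i ∈ A i) ∧ (∀ i, ‖w i - z‖ ≤ δ) ∧
      (∀ i, W i ∈ FrechetNormalCone (A i) (w i)) ∧ ‖∑ i, W i - V‖ ≤ δ := by
  obtain ⟨r₀, hr₀, hball⟩ := Metric.nhds_basis_closedBall.eventually_iff.mp
    (eventually_nhdsWithin_iff.mp (hV.2 (δ / 4) (by positivity)))
  set r := min δ r₀
  have hr : 0 < r := lt_min hδ hr₀
  set ρ := δ / (2 * r)
  have hρ : 0 < ρ := by positivity
  have hρr : ρ * r / 2 = δ / 4 := by simp only [ρ]; field_simp; ring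
  obtain ⟨μ, y, w, hmin, hy, hwA, hw⟩ := exists_isMinOn_penalizedObjective hA hV.1 hρ hr
    fun c hc hcz => hρr ▸ hball (mem_closedBall_iff_norm.mpr (hcz.trans (min_le_right _ _))) hc
  have hr34 : 3 * r / 4 < r := by linarith
  obtain ⟨hW, hsum⟩ := mem_frechetNormalCone_of_isMinOn_penalizedObjective hmin (hy.trans hr34) hwA
    fun i => (hw i).trans hr34
  refine ⟨w, fun i => (2 * μ) • (y - w i), hwA,
    fun i => (hw i).le.trans (by linarith [min_le_left δ r₀]), hW, ?_⟩
  rw [hsum, sub_sub_cancel_left, norm_neg, norm_smul, Real.norm_of_nonneg (by positivity)]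
  calc 2 * ρ * ‖y - z‖ ≤ 2 * ρ * (3 * r / 4) := by gcongr
    _ ≤ δ := by rw [show 2 * ρ * (3 * r / 4) = 3 * (ρ * r / 2) by ring, hρr]; linarith

end FuzzyIntersection

section Epigraph

variable {H : Type*}

@[simp] theorem mkP_fst (x : H) (t : ℝ) : (mkP x t).fst = x := rfl

@[simp] theorem mkP_snd (x : H) (t : ℝ) : (mkP x t).snd = t := rfl

theorem mkP_fst_snd (p : WithLp 2 (H × ℝ)) : mkP p.fst p.snd = p := rfl

theorem mem_epiSet_iff {f : H → EReal} {p : WithLp 2 (H × ℝ)} :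
    p ∈ epiSet f ↔ f p.fst ≤ p.snd := Iff.rfl

theorem isClosed_epiSet [TopologicalSpace H] {f : H → EReal} (hf : LowerSemicontinuous f) :
    IsClosed (epiSet f) :=
  hf.isClosed_epigraph.preimage <|
    (WithLp.continuous_fst 2 _ _).prodMk
      (continuous_coe_real_ereal.comp (WithLp.continuous_snd 2 _ _))

variable [NormedAddCommGroup H]

@[simp] theorem mkP_zero : mkP (0 : H) 0 = 0 := rfl

@[simp] theorem mkP_add (x y : H) (t s : ℝ) : mkP x t + mkP y s = mkP (x + y) (t + s) := rfl

@[simp] theorem mkP_sub (x y : H) (t s : ℝ) : mkP x t - mkP y s = mkP (x - y) (t - s) := rfl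

theorem norm_mkP_zero (x : H) : ‖mkP x 0‖ = ‖x‖ := WithLp.norm_toLp_fst _ _ _ x

variable [InnerProductSpace ℝ H]

@[simp] theorem smul_mkP (c : ℝ) (x : H) (t : ℝ) : c • mkP x t = mkP (c • x) (c * t) := rfl

theorem inner_mkP (W : WithLp 2 (H × ℝ)) (x : H) (t : ℝ) :
    ⟪W, mkP x t⟫ = ⟪W.fst, x⟫ + W.snd * t := by
  simp [WithLp.prod_inner_apply, mkP, mul_comm]

/-- Strictly above the graph, vertical lines enter `epi f` both upwards and downwards. -/
theorem snd_eq_zero_of_mem_frechetNormalCone_epiSet {f : H → EReal} {x : H} {t : ℝ}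
    {W : WithLp 2 (H × ℝ)} (hW : W ∈ FrechetNormalCone (epiSet f) (mkP x t)) (hlt : f x < t) :
    W.snd = 0 := by
  have hxt : f x ≤ t := hW.1
  obtain ⟨r, hrt, hr⟩ := EReal.lt_iff_exists_real_btwn.mp hlt
  have hup := inner_nonpos_of_mem_frechetNormalCone hW (d := mkP 0 1) <|
    eventually_nhdsWithin_of_forall fun τ (hτ : 0 < τ) => by
      simp only [smul_mkP, mkP_add, mem_epiSet_iff, mkP_fst, mkP_snd, smul_zero, add_zero]
      exact hxt.trans (EReal.coe_le_coe_iff.mpr (by linarith))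
  have hdown := inner_nonpos_of_mem_frechetNormalCone hW (d := mkP 0 (-1)) <|
    eventually_of_mem (Ioo_mem_nhdsGT (sub_pos.mpr (EReal.coe_lt_coe_iff.mp hr)))
      fun τ hτ => by
        simp only [smul_mkP, mkP_add, mem_epiSet_iff, mkP_fst, mkP_snd, smul_zero, add_zero]
        exact hrt.le.trans (EReal.coe_le_coe_iff.mpr (by linarith [hτ.2]))
  simp only [inner_mkP, inner_zero_right, zero_add] at hup hdown
  linarith

theorem mem_frechetNormalCone_epiSet_graph {f : H → EReal} {x : H} {t : ℝ}
    {W : WithLp 2 (H × ℝ)} (hW : W ∈ FrechetNormalCone (epiSet f) (mkP x t)) (hbot : f x ≠ ⊥) :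
    f x ≠ ⊤ ∧ W ∈ FrechetNormalCone (epiSet f) (mkP x (f x).toReal) := by
  have hxt : f x ≤ t := hW.1
  have htop : f x ≠ ⊤ := ne_top_of_le_ne_top (EReal.coe_ne_top t) hxt
  refine ⟨htop, ?_⟩
  obtain ⟨r, hr⟩ : ∃ r : ℝ, f x = r := ⟨_, (EReal.coe_toReal htop hbot).symm⟩
  rw [hr, EReal.toReal_coe]
  rcases (EReal.coe_le_coe_iff.mp (hr ▸ hxt)).eq_or_lt with rfl | hrt
  · exact hW
  have hsnd := snd_eq_zero_of_mem_frechetNormalCone_epiSet hW (hr ▸ EReal.coe_lt_coe_iff.mpr hrt)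
  -- lift points of `epi f` near `(x, r)` to height `t`
  refine mem_frechetNormalCone_of_comp (g := fun p => mkP p.fst t) (L := 1)
    (show f x ≤ r from hr.le) hW ?_
  have hbelow : ∀ᶠ p in 𝓝 (mkP x r), p.snd < t :=
    ((WithLp.continuous_snd 2 _ _).tendsto _).eventually (eventually_lt_nhds hrt)
  filter_upwards [self_mem_nhdsWithin, nhdsWithin_le_nhds hbelow] with p hp hpt
  refine ⟨hp.trans (EReal.coe_le_coe_iff.mpr hpt.le), ?_, ?_⟩
  · rw [mkP_sub, sub_self, norm_mkP_zero, one_mul]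
    exact WithLp.norm_fst_le H (p - mkP x r)
  · rw [← mkP_fst_snd p, mkP_sub, mkP_sub, inner_mkP, inner_mkP, hsnd]
    simp

end Epigraph

section Lift

variable {H ι : Type*}

def cylProj (i : ι) (z : WithLp 2 (H × EuclideanSpace ℝ ι)) : WithLp 2 (H × ℝ) :=
  mkP z.fst (z.snd i)

noncomputable def cylProjAdj [DecidableEq ι] (i : ι) (p : WithLp 2 (H × ℝ)) :
    WithLp 2 (H × EuclideanSpace ℝ ι) :=
  WithLp.toLp 2 (p.fst, EuclideanSpace.single i p.snd)

def sumProj [Fintype ι] (z : WithLp 2 (H × EuclideanSpace ℝ ι)) : WithLp 2 (H × ℝ) :=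
  mkP z.fst (∑ i, z.snd i)

def sumProjAdj (p : WithLp 2 (H × ℝ)) : WithLp 2 (H × EuclideanSpace ℝ ι) :=
  WithLp.toLp 2 (p.fst, WithLp.toLp 2 fun _ => p.snd)

theorem cylProj_cylProjAdj [DecidableEq ι] (i : ι) (p : WithLp 2 (H × ℝ)) :
    cylProj i (cylProjAdj i p) = p := by
  simp [cylProj, cylProjAdj]; rfl

theorem cylProj_cylProjAdj_of_ne [DecidableEq ι] {i j : ι} (hji : j ≠ i) (p : WithLp 2 (H × ℝ)) :
    cylProj i (cylProjAdj j p) = mkP p.fst 0 := by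
  simp [cylProj, cylProjAdj, hji.symm]

variable [NormedAddCommGroup H]

theorem continuous_cylProj (i : ι) : Continuous (cylProj (H := H) i) :=
  (WithLp.prod_continuous_toLp 2 H ℝ).comp <|
    (WithLp.continuous_fst 2 _ _).prodMk
      ((PiLp.continuous_apply 2 _ i).comp (WithLp.continuous_snd 2 _ _))

theorem cylProj_add (i : ι) (z w : WithLp 2 (H × EuclideanSpace ℝ ι)) :
    cylProj i (z + w) = cylProj i z + cylProj i w := rfl

@[simp] theorem cylProjAdj_zero [DecidableEq ι] (i : ι) : cylProjAdj (H := H) i 0 = 0 := by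
  simp [cylProjAdj]

theorem norm_cylProjAdj [DecidableEq ι] [Fintype ι] (i : ι) (p : WithLp 2 (H × ℝ)) :
    ‖cylProjAdj i p‖ = ‖p‖ := by
  rw [← sq_eq_sq₀ (norm_nonneg _) (norm_nonneg _), WithLp.prod_norm_sq_eq_of_L2,
    WithLp.prod_norm_sq_eq_of_L2]
  simp [cylProjAdj]

theorem sumProj_sub [Fintype ι] (z w : WithLp 2 (H × EuclideanSpace ℝ ι)) :
    sumProj (z - w) = sumProj z - sumProj w := by
  simp [sumProj, Finset.sum_sub_distrib]

theorem norm_sumProj_le [Fintype ι] (z : WithLp 2 (H × EuclideanSpace ℝ ι)) :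
    ‖sumProj z‖ ≤ (1 + Fintype.card ι) * ‖z‖ := by
  have hsnd : |∑ i, z.snd i| ≤ Fintype.card ι * ‖z‖ := by
    calc |∑ i, z.snd i| ≤ ∑ i, |z.snd i| := Finset.abs_sum_le_sum_abs _ _
      _ ≤ ∑ _i : ι, ‖z‖ := Finset.sum_le_sum fun i _ =>
          (PiLp.norm_apply_le z.snd i).trans (WithLp.norm_snd_le H z)
      _ = Fintype.card ι * ‖z‖ := by simp
  calc ‖sumProj z‖ = ‖mkP z.fst 0 + mkP 0 (∑ i, z.snd i)‖ := by simp [sumProj]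
    _ ≤ ‖z.fst‖ + |∑ i, z.snd i| := by
        refine (norm_add_le _ _).trans (add_le_add (norm_mkP_zero _).le ?_)
        exact (WithLp.norm_toLp_snd _ _ _ _).le
    _ ≤ (1 + Fintype.card ι) * ‖z‖ := by linarith [WithLp.norm_fst_le H z]

variable [InnerProductSpace ℝ H]

theorem cylProj_smul (i : ι) (c : ℝ) (z : WithLp 2 (H × EuclideanSpace ℝ ι)) :
    cylProj i (c • z) = c • cylProj i z := rfl

theorem inner_cylProjAdj [DecidableEq ι] [Fintype ι] (i : ι)
    (W : WithLp 2 (H × EuclideanSpace ℝ ι)) (p : WithLp 2 (H × ℝ)) :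
    ⟪W, cylProjAdj i p⟫ = ⟪cylProj i W, p⟫ := by
  simp [WithLp.prod_inner_apply, cylProj, cylProjAdj, mkP, EuclideanSpace.inner_single_right]

theorem inner_sumProjAdj [Fintype ι] (V : WithLp 2 (H × ℝ))
    (z : WithLp 2 (H × EuclideanSpace ℝ ι)) : ⟪sumProjAdj V, z⟫ = ⟪V, sumProj z⟫ := by
  simp [WithLp.prod_inner_apply, sumProj, sumProjAdj, mkP, PiLp.inner_apply, Finset.mul_sum,
    mul_comm]

theorem cylProj_mem_frechetNormalCone [DecidableEq ι] [Fintype ι] {C : Set (WithLp 2 (H × ℝ))}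
    {i : ι} {z W : WithLp 2 (H × EuclideanSpace ℝ ι)}
    (hW : W ∈ FrechetNormalCone (cylProj i ⁻¹' C) z) :
    cylProj i W ∈ FrechetNormalCone C (cylProj i z) := by
  refine mem_frechetNormalCone_of_comp (g := fun p => z + cylProjAdj i (p - cylProj i z)) (L := 1)
    hW.1 (by simpa only [sub_self, cylProjAdj_zero, add_zero] using hW)
    (eventually_nhdsWithin_of_forall fun p hp => ⟨?_, ?_, ?_⟩)
  · rwa [mem_preimage, cylProj_add, cylProj_cylProjAdj, add_sub_cancel]
  · simp only [sub_self, cylProjAdj_zero, add_zero, add_sub_cancel_left, norm_cylProjAdj, one_mul,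
      le_refl]
  · simp only [sub_self, cylProjAdj_zero, add_zero, add_sub_cancel_left, inner_cylProjAdj, le_refl]

theorem snd_apply_eq_zero_of_mem_frechetNormalCone_cylinder [DecidableEq ι] [Fintype ι]
    {C : Set (WithLp 2 (H × ℝ))} {i j : ι} {z W : WithLp 2 (H × EuclideanSpace ℝ ι)}
    (hW : W ∈ FrechetNormalCone (cylProj i ⁻¹' C) z) (hji : j ≠ i) : W.snd j = 0 := by
  have h := inner_eq_zero_of_mem_frechetNormalCone hW (d := cylProjAdj j (mkP 0 1)) fun t => by
    rw [mem_preimage, cylProj_add, cylProj_smul, cylProj_cylProjAdj_of_ne hji, smul_mkP]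
    simpa using hW.1
  rwa [inner_cylProjAdj, inner_mkP, inner_zero_right, zero_add, mul_one] at h

theorem sumProjAdj_mem_frechetNormalCone [Fintype ι]
    {Ω : Set (WithLp 2 (H × EuclideanSpace ℝ ι))} {C : Set (WithLp 2 (H × ℝ))}
    {z : WithLp 2 (H × EuclideanSpace ℝ ι)} {V : WithLp 2 (H × ℝ)}
    (hz : z ∈ Ω) (hΩ : MapsTo sumProj Ω C) (hV : V ∈ FrechetNormalCone C (sumProj z)) :
    sumProjAdj V ∈ FrechetNormalCone Ω z :=
  mem_frechetNormalCone_of_comp (g := sumProj) (L := 1 + Fintype.card ι) hz hV <|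
    eventually_nhdsWithin_of_forall fun y hy =>
      ⟨hΩ hy, sumProj_sub y z ▸ norm_sumProj_le _, by rw [inner_sumProjAdj, sumProj_sub]⟩

end Lift

section FuzzySumRule

variable {H ι : Type*} [NormedAddCommGroup H] [InnerProductSpace ℝ H] [Fintype ι]

/-- The fuzzy sum rule for epigraphical normals. -/
theorem exists_frechetNormalCone_epiSet_near_of_sum [FiniteDimensional ℝ H] [Nonempty ι]
    {f : ι → H → EReal} (hlsc : ∀ i, LowerSemicontinuous (f i)) (hbot : ∀ i x, f i x ≠ ⊥)
    {p V : WithLp 2 (H × ℝ)} (hV : V ∈ FrechetNormalCone (epiSet fun x => ∑ i, f i x) p)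
    {δ : ℝ} (hδ : 0 < δ) :
    ∃ (x : ι → H) (B : ι → WithLp 2 (H × ℝ)), (∀ i, ‖x i - p.fst‖ ≤ δ) ∧ (∀ i, f i (x i) ≠ ⊤) ∧
      (∀ i, B i ∈ FrechetNormalCone (epiSet (f i)) (mkP (x i) (f i (x i)).toReal)) ∧
      ‖∑ i, (B i).fst - V.fst‖ ≤ δ ∧ ∀ i, |(B i).snd - V.snd| ≤ δ := by
  classical
  set Ω := ⋂ i, cylProj i ⁻¹' epiSet (f i)
  obtain ⟨α, hα, hαsum⟩ := exists_le_sum_eq_of_sum_le (fun i => hbot i p.fst) hV.1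
  set z : WithLp 2 (H × EuclideanSpace ℝ ι) := WithLp.toLp 2 (p.fst, WithLp.toLp 2 α)
  have hzΩ : z ∈ Ω := mem_iInter.mpr hα
  have hzp : sumProj z = p := by simp [sumProj, z, hαsum, mkP_fst_snd]
  have hmaps : MapsTo sumProj Ω (epiSet fun x => ∑ i, f i x) := fun y hy => by
    rw [mem_epiSet_iff, sumProj, mkP_fst, mkP_snd, EReal.coe_finsetSum]
    exact Finset.sum_le_sum fun i _ => mem_iInter.mp hy i
  obtain ⟨w, W, -, hwz, hW, hWV⟩ := exists_frechetNormalCone_sum_near_of_iInter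
    (fun i => (isClosed_epiSet (hlsc i)).preimage (continuous_cylProj i))
    (sumProjAdj_mem_frechetNormalCone hzΩ hmaps (hzp ▸ hV)) hδ
  choose hfin hB using fun i =>
    mem_frechetNormalCone_epiSet_graph (cylProj_mem_frechetNormalCone (hW i)) (hbot i (w i).fst)
  refine ⟨fun i => (w i).fst, fun i => cylProj i (W i), fun i => ?_, hfin, hB, ?_, fun i => ?_⟩
  · exact (WithLp.norm_fst_le H (w i - z)).trans (hwz i)
  · have h : ∑ i, (cylProj i (W i)).fst - V.fst = (∑ i, W i - sumProjAdj V).fst := by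
      simp [cylProj, sumProjAdj, WithLp.fst_sum]
    exact h ▸ (WithLp.norm_fst_le H _).trans hWV
  · have h : (cylProj i (W i)).snd - V.snd = (∑ j, W j - sumProjAdj V).snd i := by
      have hsum : (∑ j, W j).snd i = (W i).snd i := by
        simp only [WithLp.snd_sum, WithLp.ofLp_sum, Finset.sum_apply]
        exact Finset.sum_eq_single i (fun j _ hji =>
          snd_apply_eq_zero_of_mem_frechetNormalCone_cylinder (hW j) hji.symm) (by simp)
      simp [cylProj, sumProjAdj, ← hsum]
    exact h ▸ (PiLp.norm_apply_le _ i).trans ((WithLp.norm_snd_le H _).trans hWV)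

end FuzzySumRule

section AtInfinity

variable {H ι : Type*} [NormedAddCommGroup H] [InnerProductSpace ℝ H]

structure IsNormalSeqAtInfty (f : H → EReal) (x : ℕ → H) (B : ℕ → WithLp 2 (H × ℝ)) :
    Prop where
  tendsto_norm : Tendsto (fun k => ‖x k‖) atTop atTop
  ne_top : ∀ k, f (x k) ≠ ⊤
  mem_frechetNormalCone : ∀ k, B k ∈ FrechetNormalCone (epiSet f) (mkP (x k) (f (x k)).toReal)

namespace IsNormalSeqAtInfty

variable {f : H → EReal} {x : ℕ → H} {B : ℕ → WithLp 2 (H × ℝ)}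

theorem comp (h : IsNormalSeqAtInfty f x B) {φ : ℕ → ℕ} (hφ : StrictMono φ) :
    IsNormalSeqAtInfty f (x ∘ φ) (B ∘ φ) :=
  ⟨h.tendsto_norm.comp hφ.tendsto_atTop, fun k => h.ne_top (φ k),
    fun k => h.mem_frechetNormalCone (φ k)⟩

theorem smul (h : IsNormalSeqAtInfty f x B) {c : ℕ → ℝ} (hc : ∀ k, 0 ≤ c k) :
    IsNormalSeqAtInfty f x fun k => c k • B k :=
  ⟨h.tendsto_norm, h.ne_top,
    fun k => smul_mem_frechetNormalCone (hc k) (h.mem_frechetNormalCone k)⟩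

theorem mem_nclAtInfty (h : IsNormalSeqAtInfty f x B) {L : WithLp 2 (H × ℝ)}
    (hL : Tendsto B atTop (𝓝 L)) : (L.fst, L.snd) ∈ NclAtInfty f :=
  ⟨x, B, h.ne_top, h.tendsto_norm,
    fun k => frechetNormalCone_subset_limitingNormalCone _ _ (h.mem_frechetNormalCone k),
    ((WithLp.prod_continuous_ofLp 2 H ℝ).tendsto L).comp hL⟩

end IsNormalSeqAtInfty

theorem exists_frechetNormal_seq_of_mem_nclAtInfty {f : H → EReal} {q : H × ℝ}
    (hq : q ∈ NclAtInfty f) :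
    ∃ P V : ℕ → WithLp 2 (H × ℝ), (∀ k, V k ∈ FrechetNormalCone (epiSet f) (P k)) ∧
      Tendsto (fun k => ‖(P k).fst‖) atTop atTop ∧ Tendsto V atTop (𝓝 (WithLp.toLp 2 q)) := by
  obtain ⟨xs, ws, -, hxs, hws, hlim⟩ := hq
  have key : ∀ k : ℕ, ∃ P V, V ∈ FrechetNormalCone (epiSet f) P ∧
      dist P (mkP (xs k) (f (xs k)).toReal) < 1 / (k + 1) ∧ dist V (ws k) < 1 / (k + 1) := by
    intro k
    obtain ⟨ys, vs, hvs, hys, hvlim⟩ := hws k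
    have hpos : (0 : ℝ) < 1 / (k + 1) := by positivity
    obtain ⟨l, hl⟩ := ((hys.eventually (Metric.ball_mem_nhds _ hpos)).and
      (hvlim.eventually (Metric.ball_mem_nhds _ hpos))).exists
    exact ⟨ys l, vs l, hvs l, hl.1, hl.2⟩
  choose P V hV hP hVw using key
  refine ⟨P, V, hV, tendsto_atTop_mono (fun k => ?_) (tendsto_atTop_add_const_right _ (-1) hxs), ?_⟩
  · have hk : 1 / ((k : ℝ) + 1) ≤ 1 := by
      rw [div_le_one (by positivity)]; linarith [k.cast_nonneg (α := ℝ)]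
    have h₁ := WithLp.norm_fst_le H (P k - mkP (xs k) (f (xs k)).toReal)
    rw [← dist_eq_norm] at h₁
    have h₂ := norm_sub_norm_le (xs k) (P k).fst
    rw [norm_sub_rev] at h₂
    simp only [WithLp.sub_fst, mkP_fst] at h₁
    linarith [hP k]
  · refine (((WithLp.prod_continuous_toLp 2 H ℝ).tendsto q).comp hlim).congr_dist ?_
    refine squeeze_zero (fun k => dist_nonneg) (fun k => (dist_comm _ _).trans_le (hVw k).le)
      tendsto_one_div_add_atTop_nhds_zero_nat

variable [Fintype ι]

/-- Under the qualification condition the normals stay bounded: otherwise their normalisations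
accumulate at singular subgradients at infinity that sum to zero and are not all zero. -/
theorem bddAbove_norm_of_qualification [FiniteDimensional ℝ H] {f : ι → H → EReal}
    (hQC : ∀ u : ι → H, (∀ i, u i ∈ singSubInfty (f i)) → ∑ i, u i = 0 → ∀ i, u i = 0)
    {x : ℕ → ι → H} {B : ℕ → ι → WithLp 2 (H × ℝ)}
    (hB : ∀ i, IsNormalSeqAtInfty (f i) (fun k => x k i) fun k => B k i) {u : H} {s : ℝ}
    (hu : Tendsto (fun k => ∑ i, (B k i).fst) atTop (𝓝 u))
    (hs : ∀ i, Tendsto (fun k => (B k i).snd) atTop (𝓝 s)) :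
    BddAbove (range fun k => ‖B k‖) := by
  by_contra hunb
  have hfreq : ∀ j : ℕ, ∃ᶠ k in atTop, (j : ℝ) + 1 ≤ ‖B k‖ := by
    intro j
    by_contra h
    rw [not_frequently] at h
    exact hunb <|
      (isBoundedUnder_of_eventually_le (h.mono fun k hk => (not_le.mp hk).le)).bddAbove_range
  obtain ⟨φ, hφ, hφB⟩ := extraction_forall_of_frequently hfreq
  have hMpos : ∀ j, 0 < ‖B (φ j)‖ := fun j => lt_of_lt_of_le (by positivity) (hφB j)
  have hMinv : Tendsto (fun j => ‖B (φ j)‖⁻¹) atTop (𝓝 0) :=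
    tendsto_inv_atTop_zero.comp <| tendsto_atTop_mono hφB <|
      tendsto_atTop_add_const_right _ 1 tendsto_natCast_atTop_atTop
  set D := fun j => ‖B (φ j)‖⁻¹ • B (φ j)
  have hD : ∀ j, D j ∈ Metric.sphere 0 1 := fun j => by
    simp [D, norm_smul, inv_mul_cancel₀ (hMpos j).ne']
  obtain ⟨Dlim, hDlim, ψ, hψ, hDconv⟩ := (isCompact_sphere 0 1).tendsto_subseq hD
  have hDi : ∀ i, Tendsto (fun j => D (ψ j) i) atTop (𝓝 (Dlim i)) := fun i =>
    ((continuous_apply i).tendsto _).comp hDconv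
  have hsnd : ∀ i, (Dlim i).snd = 0 := fun i => by
    have h := (hMinv.mul ((hs i).comp hφ.tendsto_atTop)).comp hψ.tendsto_atTop
    rw [zero_mul] at h
    exact tendsto_nhds_unique (((WithLp.continuous_snd 2 _ _).tendsto _).comp (hDi i)) h
  have hsum : ∑ i, (Dlim i).fst = 0 := by
    refine tendsto_nhds_unique (tendsto_finsetSum _ fun i _ =>
      ((WithLp.continuous_fst 2 _ _).tendsto _).comp (hDi i)) ?_
    have h := (hMinv.smul (hu.comp hφ.tendsto_atTop)).comp hψ.tendsto_atTop
    rw [zero_smul] at h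
    exact h.congr fun j => by simp [D, Finset.smul_sum]
  have hmem : ∀ i, (Dlim i).fst ∈ singSubInfty (f i) := fun i => by
    have hnormal := (((hB i).comp hφ).smul fun j => (inv_pos.mpr (hMpos j)).le).comp hψ
    have h := hnormal.mem_nclAtInfty (hDi i)
    rwa [hsnd i] at h
  have hzero : Dlim = 0 := funext fun i => by
    rw [← mkP_fst_snd (Dlim i), hQC _ hmem hsum i, hsnd i, mkP_zero]; rfl
  simp [hzero] at hDlim

theorem exists_sum_eq_of_qualification [FiniteDimensional ℝ H] {f : ι → H → EReal}
    (hQC : ∀ u : ι → H, (∀ i, u i ∈ singSubInfty (f i)) → ∑ i, u i = 0 → ∀ i, u i = 0)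
    {x : ℕ → ι → H} {B : ℕ → ι → WithLp 2 (H × ℝ)}
    (hB : ∀ i, IsNormalSeqAtInfty (f i) (fun k => x k i) fun k => B k i) {u : H} {s : ℝ}
    (hu : Tendsto (fun k => ∑ i, (B k i).fst) atTop (𝓝 u))
    (hs : ∀ i, Tendsto (fun k => (B k i).snd) atTop (𝓝 s)) :
    ∃ g : ι → H, (∀ i, (g i, s) ∈ NclAtInfty (f i)) ∧ ∑ i, g i = u := by
  obtain ⟨R, hR⟩ := bddAbove_norm_of_qualification hQC hB hu hs
  obtain ⟨L, -, φ, hφ, hL⟩ := (isCompact_closedBall (0 : ι → WithLp 2 (H × ℝ)) R).tendsto_subseq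
    fun k => mem_closedBall_zero_iff.mpr (hR ⟨k, rfl⟩)
  have hLi : ∀ i, Tendsto (fun k => B (φ k) i) atTop (𝓝 (L i)) := fun i =>
    ((continuous_apply i).tendsto _).comp hL
  have hsnd : ∀ i, (L i).snd = s := fun i =>
    tendsto_nhds_unique (((WithLp.continuous_snd 2 _ _).tendsto _).comp (hLi i))
      ((hs i).comp hφ.tendsto_atTop)
  refine ⟨fun i => (L i).fst, fun i => hsnd i ▸ ((hB i).comp hφ).mem_nclAtInfty (hLi i), ?_⟩
  exact tendsto_nhds_unique (tendsto_finsetSum _ fun i _ =>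
    ((WithLp.continuous_fst 2 _ _).tendsto _).comp (hLi i)) (hu.comp hφ.tendsto_atTop)

theorem nclAtInfty_sum_subset [FiniteDimensional ℝ H] [Nonempty ι] {f : ι → H → EReal}
    (hlsc : ∀ i, LowerSemicontinuous (f i)) (hbot : ∀ i x, f i x ≠ ⊥)
    (hQC : ∀ u : ι → H, (∀ i, u i ∈ singSubInfty (f i)) → ∑ i, u i = 0 → ∀ i, u i = 0) (s : ℝ) :
    {u | (u, s) ∈ NclAtInfty fun x => ∑ i, f i x} ⊆ ∑ i, {g | (g, s) ∈ NclAtInfty (f i)} := by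
  intro u hu
  obtain ⟨P, V, hV, hP, hVlim⟩ :=
    exists_frechetNormal_seq_of_mem_nclAtInfty (Set.mem_ofPred.mp hu)
  have hδ := tendsto_one_div_add_atTop_nhds_zero_nat (𝕜 := ℝ)
  choose x B hx hfx hB hfst hsnd using fun k : ℕ =>
    exists_frechetNormalCone_epiSet_near_of_sum hlsc hbot (hV k)
      (by positivity : (0 : ℝ) < 1 / (k + 1))
  have hk1 : ∀ k : ℕ, 1 / ((k : ℝ) + 1) ≤ 1 := fun k => by
    rw [div_le_one (by positivity)]; linarith [k.cast_nonneg (α := ℝ)]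
  have hxP : ∀ k i, ‖(P k).fst‖ + -1 ≤ ‖x k i‖ := fun k i => by
    linarith [norm_sub_norm_le (P k).fst (x k i), norm_sub_rev (P k).fst (x k i), hx k i, hk1 k]
  have hnormal : ∀ i, IsNormalSeqAtInfty (f i) (fun k => x k i) fun k => B k i := fun i =>
    ⟨tendsto_atTop_mono (fun k => hxP k i) (tendsto_atTop_add_const_right _ (-1) hP),
      fun k => hfx k i, fun k => hB k i⟩
  have hu : Tendsto (fun k => ∑ i, (B k i).fst) atTop (𝓝 u) :=
    (((WithLp.continuous_fst 2 _ _).tendsto _).comp hVlim).congr_dist <|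
      squeeze_zero (fun k => dist_nonneg)
        (fun k => by rw [dist_comm, dist_eq_norm]; exact hfst k) hδ
  have hs : ∀ i, Tendsto (fun k => (B k i).snd) atTop (𝓝 s) := fun i =>
    (((WithLp.continuous_snd 2 _ _).tendsto _).comp hVlim).congr_dist <|
      squeeze_zero (fun k => dist_nonneg)
        (fun k => by rw [dist_comm, Real.dist_eq]; exact hsnd k i) hδ
  obtain ⟨g, hg, hgu⟩ := exists_sum_eq_of_qualification hQC hnormal hu hs
  exact (Set.mem_fintype_sum _ _).mpr ⟨g, hg, hgu⟩

end AtInfinity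

theorem sum_rule_at_infinity_general {n m : ℕ} (hm : 2 ≤ m)
    (f : Fin m → EuclideanSpace ℝ (Fin n) → EReal)
    (hlsc : ∀ i, LowerSemicontinuous (f i)) (hbot : ∀ i x, f i x ≠ ⊥)
    (hQC : ∀ u : Fin m → EuclideanSpace ℝ (Fin n),
      (∀ i, u i ∈ singSubInfty (f i)) → (∑ i, u i) = 0 → ∀ i, u i = 0) :
    subInfty (fun x => ∑ i, f i x) ⊆ ∑ i, subInfty (f i) ∧
    singSubInfty (fun x => ∑ i, f i x) ⊆ ∑ i, singSubInfty (f i) := by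
  have : Nonempty (Fin m) := ⟨⟨0, by omega⟩⟩
  exact ⟨nclAtInfty_sum_subset hlsc hbot hQC (-1), nclAtInfty_sum_subset hlsc hbot hQC 0⟩

/-- Proposition 2.13: sum rules for the limiting and singular
subdifferentials at infinity. -/
theorem sum_rule_at_infinity {n m : ℕ} (hm : 2 ≤ m)
    (f : Fin m → EuclideanSpace ℝ (Fin n) → EReal)
    (hlsc : ∀ i, LowerSemicontinuous (f i)) (hbot : ∀ i x, f i x ≠ ⊥)
    (hdom : ∀ i, ¬ Bornology.IsBounded {x | f i x ≠ ⊤})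
    (hdomsum : ¬ Bornology.IsBounded {x | (∑ i, f i x) ≠ ⊤})
    (hQC : ∀ u : Fin m → EuclideanSpace ℝ (Fin n),
      (∀ i, u i ∈ singSubInfty (f i)) → (∑ i, u i) = 0 → ∀ i, u i = 0) :
    subInfty (fun x => ∑ i, f i x) ⊆ ∑ i, subInfty (f i) ∧
    singSubInfty (fun x => ∑ i, f i x) ⊆ ∑ i, singSubInfty (f i) :=
  sum_rule_at_infinity_general hm f hlsc hbot hQC
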